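/- arXiv:2111.05719 — 3 statements merged into one kernel-verified Lean document; each statement's English description precedes it below -/
import Mathlib

section
/- Let K ≥ 1 and let a > 0, b > 0, σ² > 0, q > 0 be real constants, let c_k > 0, h_k ≥ 0, p_k ≥ 0 for k = 1,…,K, and set d_k = h_k·√(p_k). Assume Σ_{k=1}^K c_k d_k > 0. Then the function g(η) = a·Σ_{k=1}^K c_k (d_k/√η − 1)² + b σ² q/η, defined for η > 0, attains its minimum over (0,∞) at η* = ((a·Σ_{k=1}^K c_k d_k² + b σ² q)/(a·Σ_{k=1}^K c_k d_k))². (Proposition 2: optimal denoising factor for the per-iteration AirComp aggregation error.) -/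
/-! In the variable `t = 1 / √η` the aggregation error is the quadratic
`(a Σ c_k d_k² + b σ² q) t² - 2 (a Σ c_k d_k) t + a Σ c_k`, whose leading coefficient is
positive, so it is minimised at `t = a Σ c_k d_k / (a Σ c_k d_k² + b σ² q)`, i.e. at
`√η = 1 / t`. -/

open Finset Real

theorem sum_mul_mul_sub_one_sq {ι : Type*} (s : Finset ι) (c d : ι → ℝ) (t : ℝ) :
    ∑ i ∈ s, c i * (d i * t - 1) ^ 2 =
      (∑ i ∈ s, c i * d i ^ 2) * t ^ 2 - 2 * (∑ i ∈ s, c i * d i) * t + ∑ i ∈ s, c i := by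
  simp only [sum_mul, mul_sum, ← sum_sub_distrib, ← sum_add_distrib]
  exact sum_congr rfl fun i _ => by ring

theorem quadratic_le_of_mul_eq {A B u : ℝ} (hA : 0 ≤ A) (hu : A * u = B) (C t : ℝ) :
    A * u ^ 2 - 2 * B * u + C ≤ A * t ^ 2 - 2 * B * t + C := by
  subst hu
  nlinarith [mul_nonneg hA (sq_nonneg (t - u))]

theorem aggregation_error_eq_quadratic {ι : Type*} (s : Finset ι) (c d : ι → ℝ)
    (a N : ℝ) {η : ℝ} (hη : 0 ≤ η) :
    a * (∑ i ∈ s, c i * (d i / √η - 1) ^ 2) + N / η =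
      (a * ∑ i ∈ s, c i * d i ^ 2 + N) * (√η)⁻¹ ^ 2
        - 2 * (a * ∑ i ∈ s, c i * d i) * (√η)⁻¹ + a * ∑ i ∈ s, c i := by
  have hη_inv : η⁻¹ = (√η)⁻¹ ^ 2 := by rw [inv_pow, sq_sqrt hη]
  simp only [div_eq_mul_inv, sum_mul_mul_sub_one_sq, hη_inv]
  ring

theorem optimal_denoising_factor_general
    (K : ℕ) (a b σ2 q : ℝ)
    (ha : 0 < a) (hb : 0 < b) (hσ2 : 0 < σ2) (hq : 0 < q)
    (c d : Fin K → ℝ)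
    (hc : ∀ k, 0 < c k)
    (hpos : 0 < ∑ k, c k * d k)
    (ηstar : ℝ)
    (hηstar : ηstar =
      ((a * ∑ k, c k * (d k) ^ 2 + b * σ2 * q) / (a * ∑ k, c k * d k)) ^ 2) :
    0 < ηstar ∧
      ∀ η : ℝ, 0 < η →
        a * (∑ k, c k * (d k / Real.sqrt ηstar - 1) ^ 2) + b * σ2 * q / ηstar ≤
        a * (∑ k, c k * (d k / Real.sqrt η - 1) ^ 2) + b * σ2 * q / η := by
  set A := a * ∑ k, c k * d k ^ 2 + b * σ2 * q
  set B := a * ∑ k, c k * d k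
  have hA : 0 < A := by
    have : 0 ≤ ∑ k, c k * d k ^ 2 := sum_nonneg fun k _ => by have := hc k; positivity
    positivity
  have hB : 0 < B := mul_pos ha hpos
  have hηstar_pos : 0 < ηstar := by rw [hηstar]; positivity
  have hA_mul : A * (√ηstar)⁻¹ = B := by
    rw [hηstar, sqrt_sq (by positivity), inv_div, mul_div_cancel₀ _ hA.ne']
  refine ⟨hηstar_pos, fun η hη => ?_⟩
  rw [aggregation_error_eq_quadratic _ _ _ _ _ hη.le,
    aggregation_error_eq_quadratic _ _ _ _ _ hηstar_pos.le]
  exact quadratic_le_of_mul_eq hA.le hA_mul _ _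

/-- Proposition 2: optimal denoising factor for the per-iteration AirComp
aggregation error. -/
theorem optimal_denoising_factor
    (K : ℕ) (hK : 1 ≤ K) (a b σ2 q : ℝ)
    (ha : 0 < a) (hb : 0 < b) (hσ2 : 0 < σ2) (hq : 0 < q)
    (c h p d : Fin K → ℝ)
    (hc : ∀ k, 0 < c k) (hh : ∀ k, 0 ≤ h k) (hp : ∀ k, 0 ≤ p k)
    (hd : ∀ k, d k = h k * Real.sqrt (p k))
    (hpos : 0 < ∑ k, c k * d k)
    (ηstar : ℝ)
    (hηstar : ηstar =
      ((a * ∑ k, c k * (d k) ^ 2 + b * σ2 * q) / (a * ∑ k, c k * d k)) ^ 2) :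
    0 < ηstar ∧
      ∀ η : ℝ, 0 < η →
        a * (∑ k, c k * (d k / Real.sqrt ηstar - 1) ^ 2) + b * σ2 * q / ηstar ≤
        a * (∑ k, c k * (d k / Real.sqrt η - 1) ^ 2) + b * σ2 * q / η :=
  optimal_denoising_factor_general K a b σ2 q ha hb hσ2 hq c d hc hpos ηstar hηstar
end

section
/- Fix a device and let T ≥ 1 be an integer; let a_t > 0, h_t > 0, η_t > 0 for t = 1,…,T, and let c > 0, M > 0, P̃ᵃᵛᵉ > 0, λ ≥ 0 be reals. Define x*_t = min( h_t √(η_t)/( h_t² + η_t λ/(a_t c T) ), M ) for each t. Suppose (1/T)·Σ_{t=1}^T (x*_t)² ≤ P̃ᵃᵛᵉ and λ·((1/T)·Σ_{t=1}^T (x*_t)² − P̃ᵃᵛᵉ) = 0. Then x* minimizes f(x) = Σ_{t=1}^T a_t c (h_t x_t/√(η_t) − 1)² over the set { x ∈ ℝ^T : 0 ≤ x_t ≤ M for all t, and (1/T)·Σ_{t=1}^T x_t² ≤ P̃ᵃᵛᵉ }. (Lemma 1: regularized channel-inversion structure of the optimal transmission amplitudes.) -/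
/-- One-dimensional quadratic comparison. -/
lemma quad_cmp (A B x y : ℝ) (hsign : 0 ≤ (y - x) * (A * (y + x) - B)) :
    A * x ^ 2 - B * x ≤ A * y ^ 2 - B * y := by nlinarith [hsign]

/-- Pointwise Lagrangian minimization over [0, M]. -/
lemma pt_min (a c h η lam Ts M x y : ℝ)
    (ha : 0 < a) (hc : 0 < c) (hh : 0 < h) (hη : 0 < η) (hlam : 0 ≤ lam)
    (hTs : 0 < Ts) (hM : 0 < M)
    (hx : x = min (h * Real.sqrt η / (h ^ 2 + η * lam / (a * c * Ts))) M)
    (hy0 : 0 ≤ y) (hyM : y ≤ M) :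
    a * c * (h * x / Real.sqrt η - 1) ^ 2 + lam / Ts * x ^ 2 ≤
    a * c * (h * y / Real.sqrt η - 1) ^ 2 + lam / Ts * y ^ 2 := by
  set s := Real.sqrt η with hsdef
  have hs0 : 0 < s := Real.sqrt_pos.mpr hη
  have hs2 : s ^ 2 = η := Real.sq_sqrt hη.le
  rw [← hs2] at hx
  set A : ℝ := a * c * h ^ 2 / s ^ 2 + lam / Ts with hA
  set B : ℝ := 2 * a * c * h / s with hB
  have hApos : 0 < A := by rw [hA]; positivity
  set D : ℝ := h ^ 2 + s ^ 2 * lam / (a * c * Ts) with hD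
  have hDpos : 0 < D := by rw [hD]; positivity
  set y0 : ℝ := h * s / D with hy0def
  have hy0pos : 0 < y0 := by rw [hy0def]; positivity
  have hAy0 : 2 * A * y0 = B := by
    rw [hA, hB, hy0def, hD]
    field_simp
  have hform : ∀ z : ℝ,
      a * c * (h * z / s - 1) ^ 2 + lam / Ts * z ^ 2 = A * z ^ 2 - B * z + a * c := by
    intro z
    rw [hA, hB]
    field_simp
    ring
  have hsign : 0 ≤ (y - x) * (A * (y + x) - B) := by
    rcases le_or_gt y0 M with hcase | hcase
    · have hxe : x = y0 := by rw [hx, hy0def]; exact min_eq_left hcase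
      rw [hxe]
      nlinarith [sq_nonneg (y - y0), hApos.le]
    · have hxe : x = M := by rw [hx, hy0def]; exact min_eq_right hcase.le
      rw [hxe]
      have h1 : y - M ≤ 0 := by linarith
      have h2 : A * (y + M) - B ≤ 0 := by nlinarith [hApos]
      nlinarith
  rw [hform x, hform y]
  have := quad_cmp A B x y hsign
  linarith

/-- Lemma 1: regularized channel-inversion structure of the optimal
transmission amplitudes, via complementary slackness. -/
theorem regularized_channel_inversion_optimal
    (T : ℕ) (hT : 1 ≤ T)
    (a h η : Fin T → ℝ)
    (ha : ∀ t, 0 < a t) (hh : ∀ t, 0 < h t) (hη : ∀ t, 0 < η t)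
    (c M Pave lam : ℝ)
    (hc : 0 < c) (hM : 0 < M) (hPave : 0 < Pave) (hlam : 0 ≤ lam)
    (xstar : Fin T → ℝ)
    (hx : ∀ t, xstar t =
      min (h t * Real.sqrt (η t) / ((h t) ^ 2 + η t * lam / (a t * c * T))) M)
    (hfeas : (1 / (T : ℝ)) * ∑ t, (xstar t) ^ 2 ≤ Pave)
    (hcs : lam * ((1 / (T : ℝ)) * ∑ t, (xstar t) ^ 2 - Pave) = 0) :
    ∀ x : Fin T → ℝ, (∀ t, 0 ≤ x t ∧ x t ≤ M) →
      (1 / (T : ℝ)) * ∑ t, (x t) ^ 2 ≤ Pave →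
      ∑ t, a t * c * (h t * xstar t / Real.sqrt (η t) - 1) ^ 2 ≤
      ∑ t, a t * c * (h t * x t / Real.sqrt (η t) - 1) ^ 2 := by
  intro x hbox hxfeas
  have hTs : (0 : ℝ) < (T : ℝ) := by exact_mod_cast hT
  have hsum : ∑ t, (a t * c * (h t * xstar t / Real.sqrt (η t) - 1) ^ 2
        + lam / (T : ℝ) * (xstar t) ^ 2) ≤
      ∑ t, (a t * c * (h t * x t / Real.sqrt (η t) - 1) ^ 2
        + lam / (T : ℝ) * (x t) ^ 2) := by
    apply Finset.sum_le_sum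
    intro t _
    exact pt_min (a t) c (h t) (η t) lam (T : ℝ) M (xstar t) (x t)
      (ha t) hc (hh t) (hη t) hlam hTs hM (hx t) (hbox t).1 (hbox t).2
  rw [Finset.sum_add_distrib, Finset.sum_add_distrib, ← Finset.mul_sum,
    ← Finset.mul_sum] at hsum
  have h1 : lam / (T : ℝ) * ∑ t, (xstar t) ^ 2 = lam * Pave := by
    have : lam * ((1 / (T : ℝ)) * ∑ t, (xstar t) ^ 2) = lam * Pave := by
      linarith [hcs]
    calc lam / (T : ℝ) * ∑ t, (xstar t) ^ 2
        = lam * ((1 / (T : ℝ)) * ∑ t, (xstar t) ^ 2) := by ring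
      _ = lam * Pave := this
  have h2 : lam / (T : ℝ) * ∑ t, (x t) ^ 2 ≤ lam * Pave := by
    calc lam / (T : ℝ) * ∑ t, (x t) ^ 2
        = lam * ((1 / (T : ℝ)) * ∑ t, (x t) ^ 2) := by ring
      _ ≤ lam * Pave := mul_le_mul_of_nonneg_left hxfeas hlam
  linarith
end

section
/- Let q ≥ 1 be an integer, let x ∈ ℝ^q with x ≠ 0, and let s ≥ 1 be an integer. For each coordinate i set r_i = |x_i|/‖x‖, l_i = ⌊s·r_i⌋, and p_i = s·r_i − l_i. Then Σ_{i=1}^q (‖x‖/s)²·p_i·(1 − p_i) ≤ min( √q/s, q/s² )·‖x‖². (Mean-squared-error bound of the stochastic low-precision quantizer: the quantization variance is at most q̂·‖x‖² with q̂ = min(√q/s, q/s²).) -/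
/-- Mean-squared-error bound of the stochastic low-precision quantizer: the
quantization variance is at most `min(√q/s, q/s²)·‖x‖²`. -/
theorem stochastic_quantizer_mse_bound
    (q : ℕ) (hq : 1 ≤ q) (x : EuclideanSpace ℝ (Fin q)) (hx : x ≠ 0)
    (s : ℕ) (hs : 1 ≤ s)
    (r p : Fin q → ℝ) (l : Fin q → ℤ)
    (hr : ∀ i, r i = |x i| / ‖x‖)
    (hl : ∀ i, l i = ⌊(s : ℝ) * r i⌋)
    (hp : ∀ i, p i = (s : ℝ) * r i - l i) :
    ∑ i, (‖x‖ / s) ^ 2 * p i * (1 - p i) ≤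
      min (Real.sqrt q / s) ((q : ℝ) / s ^ 2) * ‖x‖ ^ 2 := by
  have hxn : (0:ℝ) < ‖x‖ := norm_pos_iff.mpr hx
  have hsn : (0:ℝ) < (s:ℝ) := by exact_mod_cast hs
  have hpfract : ∀ i, p i = Int.fract ((s : ℝ) * r i) := by
    intro i; rw [hp i, hl i]; rfl
  have hp0 : ∀ i, 0 ≤ p i := fun i => by rw [hpfract i]; exact Int.fract_nonneg _
  have hp1 : ∀ i, p i ≤ 1 := fun i => by
    rw [hpfract i]; exact le_of_lt (Int.fract_lt_one _)
  have hterm_nonneg : ∀ i, 0 ≤ (‖x‖ / s) ^ 2 * p i * (1 - p i) := by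
    intro i
    have := hp0 i; have := hp1 i
    have h2 : 0 ≤ 1 - p i := by linarith
    positivity
  rw [min_mul_of_nonneg _ _ (by positivity : (0:ℝ) ≤ ‖x‖ ^ 2)]
  refine le_min ?_ ?_
  · -- bound by √q/s · ‖x‖²
    have key : ∀ i, (‖x‖ / s) ^ 2 * p i * (1 - p i) ≤ (‖x‖ / s) * |x i| := by
      intro i
      have hrnn : 0 ≤ r i := by rw [hr i]; positivity
      have hps : p i ≤ (s : ℝ) * r i := by
        have hfl : (0:ℝ) ≤ (⌊(s : ℝ) * r i⌋ : ℝ) := by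
          exact_mod_cast Int.floor_nonneg.mpr (by positivity)
        rw [hp i, hl i]; linarith
      have h1 : (‖x‖ / s) ^ 2 * p i * (1 - p i) ≤ (‖x‖ / s) ^ 2 * p i := by
        nlinarith [mul_nonneg (mul_nonneg (sq_nonneg (‖x‖ / (s:ℝ))) (hp0 i)) (hp0 i)]
      have h2 : (‖x‖ / s) ^ 2 * p i ≤ (‖x‖ / s) ^ 2 * ((s : ℝ) * r i) := by
        have : (0:ℝ) ≤ (‖x‖ / s) ^ 2 := sq_nonneg _
        exact mul_le_mul_of_nonneg_left hps this
      have h3 : (‖x‖ / s) ^ 2 * ((s : ℝ) * r i) = (‖x‖ / s) * |x i| := by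
        rw [hr i]; field_simp
      linarith
    calc ∑ i, (‖x‖ / s) ^ 2 * p i * (1 - p i)
        ≤ ∑ i, (‖x‖ / s) * |x i| := Finset.sum_le_sum fun i _ => key i
      _ = (‖x‖ / s) * ∑ i, |x i| := by rw [Finset.mul_sum]
      _ ≤ (‖x‖ / s) * (Real.sqrt q * ‖x‖) := by
          refine mul_le_mul_of_nonneg_left ?_ (by positivity)
          have hcs : (∑ i, |x i|) ^ 2 ≤ (q : ℝ) * ∑ i, |x i| ^ 2 := by
            simpa using sq_sum_le_card_mul_sum_sq (s := Finset.univ)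
              (f := fun i => |x i|)
          have hnorm : ‖x‖ ^ 2 = ∑ i, |x i| ^ 2 := by
            rw [EuclideanSpace.norm_eq]
            rw [Real.sq_sqrt (by positivity)]
            simp [Real.norm_eq_abs]
          have h1 : (∑ i, |x i|) ^ 2 ≤ (q : ℝ) * ‖x‖ ^ 2 := by rw [hnorm]; exact hcs
          have h2 : ∑ i, |x i| ≤ Real.sqrt ((q : ℝ) * ‖x‖ ^ 2) := by
            rw [show (∑ i, |x i|) = Real.sqrt ((∑ i, |x i|) ^ 2) from
              (Real.sqrt_sq (Finset.sum_nonneg fun i _ => abs_nonneg _)).symm]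
            exact Real.sqrt_le_sqrt h1
          calc ∑ i, |x i| ≤ Real.sqrt ((q : ℝ) * ‖x‖ ^ 2) := h2
            _ = Real.sqrt q * ‖x‖ := by
                rw [Real.sqrt_mul (Nat.cast_nonneg q), Real.sqrt_sq hxn.le]
      _ = Real.sqrt q / s * ‖x‖ ^ 2 := by ring
  · -- bound by q/s² · ‖x‖²
    have key : ∀ i, (‖x‖ / s) ^ 2 * p i * (1 - p i) ≤ (‖x‖ / s) ^ 2 := by
      intro i
      nlinarith [mul_nonneg (sq_nonneg (‖x‖ / (s:ℝ))) (sq_nonneg (p i - 1/2))]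
    calc ∑ i, (‖x‖ / s) ^ 2 * p i * (1 - p i)
        ≤ ∑ _i : Fin q, (‖x‖ / s) ^ 2 := Finset.sum_le_sum fun i _ => key i
      _ = (q : ℝ) * (‖x‖ / s) ^ 2 := by simp [mul_comm]
      _ = (q : ℝ) / s ^ 2 * ‖x‖ ^ 2 := by field_simp
end
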